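/- For any sorted p×q layout, the k-th smallest bottleneck value satisfies v_k ≤ ω(k) for every k ∈ {1,…,p+q−1}, where ω(k) = (k+1)(k−1)/4 + 1 if k is odd and ω(k) = k²/4 + 1 if k is even. -/

import Mathlib

/-- A `p × q` layout: a matrix whose entries are exactly the integers `1, …, p*q`. -/
def IsLayout (p q : ℕ) (A : Fin p → Fin q → ℕ) : Prop :=
  Function.Injective (fun ij : Fin p × Fin q => A ij.1 ij.2) ∧
  (Set.range fun ij : Fin p × Fin q => A ij.1 ij.2) = Set.Icc 1 (p * q)

/-- Width of a layout with respect to side lengths `l`. -/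
def layW (l : ℕ → ℕ) {p q : ℕ} (A : Fin p → Fin q → ℕ) : ℕ :=
  ∑ j : Fin q, Finset.univ.sup fun i : Fin p => l (A i j)

/-- Height of a layout with respect to side lengths `l`. -/
def layH (l : ℕ → ℕ) {p q : ℕ} (A : Fin p → Fin q → ℕ) : ℕ :=
  ∑ i : Fin p, Finset.univ.sup fun j : Fin q => l (A i j)

/-- A layout is sorted if each row and each column is strictly increasing. -/
def IsSorted {p q : ℕ} (A : Fin p → Fin q → ℕ) : Prop :=
  (∀ i, StrictMono (A i)) ∧ (∀ j, StrictMono fun i => A i j)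

/-- `ω(k) = (k+1)(k-1)/4 + 1` if `k` is odd, `k²/4 + 1` if `k` is even
(the divisions are exact). -/
def omegaFn (k : ℕ) : ℕ :=
  if k % 2 = 1 then (k + 1) * (k - 1) / 4 + 1 else k ^ 2 / 4 + 1


/-!
Let `v = v_k`, and let `a` and `b` count the entries below `v` in the first column and the first
row. Since rows and columns increase, every entry below `v` lies in the `a × b` rectangle they
span, so `v - 1 ≤ a * b`. The first row and column share only the corner, so
`a + b ≤ (k - 1) + 1`, whence `v ≤ a * b + 1 ≤ (a + b)² / 4 + 1 ≤ ⌊k² / 4⌋ + 1 = ω(k)`.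
-/

open Finset

lemma omegaFn_eq_sq_div_four (k : ℕ) : omegaFn k = k ^ 2 / 4 + 1 := by
  unfold omegaFn
  split_ifs with hk
  · obtain ⟨m, rfl⟩ : ∃ m, k = 2 * m + 1 := ⟨k / 2, by omega⟩
    have h1 : (2 * m + 1 + 1) * (2 * m + 1 - 1) = 4 * (m ^ 2 + m) := by
      rw [Nat.add_sub_cancel]; ring
    have h2 : (2 * m + 1) ^ 2 = 4 * (m ^ 2 + m) + 1 := by ring
    rw [h1, h2]
    omega
  · rfl

lemma Nat.mul_le_sq_add_div_four (a b : ℕ) : a * b ≤ (a + b) ^ 2 / 4 := by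
  rw [Nat.le_div_iff_mul_le four_pos, mul_comm, ← mul_assoc]
  exact four_mul_le_sq_add a b

lemma Finset.card_filter_lt_sort_getElem {α : Type*} [LinearOrder α] (s : Finset α) {m : ℕ}
    (hm : m < s.sort.length) : #{x ∈ s | x < s.sort[m]} = m := by
  have hm' : m < #s := by rwa [length_sort] at hm
  set e := s.orderEmbOfFin rfl
  have hfilter : {x ∈ s | x < s.sort[m]} = (Iio (⟨m, hm'⟩ : Fin #s)).map e.toEmbedding := by
    ext x
    constructor
    · intro hx
      obtain ⟨hxs, hxm⟩ := mem_filter.1 hx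
      obtain ⟨i, rfl⟩ : x ∈ Set.range e := by rw [range_orderEmbOfFin]; exact hxs
      exact mem_map_of_mem _ (mem_Iio.2 (e.lt_iff_lt.1 hxm))
    · intro hx
      obtain ⟨i, hi, rfl⟩ := mem_map.1 hx
      exact mem_filter.2 ⟨orderEmbOfFin_mem s rfl i, e.lt_iff_lt.2 (mem_Iio.1 hi)⟩
  rw [hfilter, card_map, Fin.card_Iio]

section Layout

variable {p q : ℕ} {A : Fin p → Fin q → ℕ}

def firstCol (hq : 0 < q) (A : Fin p → Fin q → ℕ) : Finset ℕ :=
  univ.image fun i => A i ⟨0, hq⟩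

def firstRow (hp : 0 < p) (A : Fin p → Fin q → ℕ) : Finset ℕ :=
  univ.image fun j => A ⟨0, hp⟩ j

def bottlenecks (hp : 0 < p) (hq : 0 < q) (A : Fin p → Fin q → ℕ) : Finset ℕ :=
  firstCol hq A ∪ firstRow hp A

lemma IsLayout.image_univ (hA : IsLayout p q A) :
    univ.image (fun ij : Fin p × Fin q => A ij.1 ij.2) = Icc 1 (p * q) := by
  apply coe_injective
  rw [coe_image, coe_univ, Set.image_univ, hA.2, coe_Icc]

lemma IsLayout.card_filter_lt_apply_add_one (hA : IsLayout p q A) (i : Fin p) (j : Fin q) :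
    #{ij : Fin p × Fin q | A ij.1 ij.2 < A i j} + 1 = A i j := by
  have hmem : A i j ∈ Icc 1 (p * q) := hA.image_univ ▸ mem_image_of_mem _ (mem_univ (i, j))
  have hbelow : {x ∈ Icc 1 (p * q) | x < A i j} = Ico 1 (A i j) := by
    ext x
    simp only [mem_filter, mem_Icc, mem_Ico] at hmem ⊢
    omega
  have hcount :
      #{x ∈ Icc 1 (p * q) | x < A i j} = #{ij : Fin p × Fin q | A ij.1 ij.2 < A i j} := by
    rw [← hA.image_univ, filter_image, card_image_of_injective _ hA.1]
  rw [← hcount, hbelow, Nat.card_Ico]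
  have := (mem_Icc.1 hmem).1
  omega

lemma IsLayout.firstCol_inter_firstRow (hA : IsLayout p q A) (hp : 0 < p) (hq : 0 < q) :
    firstCol hq A ∩ firstRow hp A = {A ⟨0, hp⟩ ⟨0, hq⟩} := by
  ext x
  simp only [firstCol, firstRow, mem_inter, mem_image, mem_univ, true_and, mem_singleton]
  constructor
  · rintro ⟨⟨i, rfl⟩, ⟨j, hj⟩⟩
    have hcorner : (i, (⟨0, hq⟩ : Fin q)) = (⟨0, hp⟩, j) := hA.1 hj.symm
    rw [(Prod.mk.inj hcorner).1]
  · rintro rfl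
    exact ⟨⟨_, rfl⟩, ⟨_, rfl⟩⟩

lemma IsSorted.card_filter_lt_firstCol (hS : IsSorted A) (hq : 0 < q) (v : ℕ) :
    #{x ∈ firstCol hq A | x < v} = #{i | A i ⟨0, hq⟩ < v} := by
  rw [firstCol, filter_image, card_image_of_injective _ (hS.2 _).injective]

lemma IsSorted.card_filter_lt_firstRow (hS : IsSorted A) (hp : 0 < p) (v : ℕ) :
    #{x ∈ firstRow hp A | x < v} = #{j | A ⟨0, hp⟩ j < v} := by
  rw [firstRow, filter_image, card_image_of_injective _ (hS.1 _).injective]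

lemma IsSorted.card_firstCol (hS : IsSorted A) (hq : 0 < q) : #(firstCol hq A) = p := by
  rw [firstCol, card_image_of_injective _ (hS.2 _).injective, card_univ, Fintype.card_fin]

lemma IsSorted.card_firstRow (hS : IsSorted A) (hp : 0 < p) : #(firstRow hp A) = q := by
  rw [firstRow, card_image_of_injective _ (hS.1 _).injective, card_univ, Fintype.card_fin]

lemma card_bottlenecks (hA : IsLayout p q A) (hS : IsSorted A) (hp : 0 < p) (hq : 0 < q) :
    #(bottlenecks hp hq A) = p + q - 1 := by
  have h := card_union_add_card_inter (firstCol hq A) (firstRow hp A)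
  rw [hA.firstCol_inter_firstRow, hS.card_firstCol, hS.card_firstRow, card_singleton] at h
  rw [bottlenecks]
  omega

lemma card_filter_lt_firstCol_add_firstRow_le (hA : IsLayout p q A) (hS : IsSorted A)
    (hp : 0 < p) (hq : 0 < q) (v : ℕ) :
    #{i | A i ⟨0, hq⟩ < v} + #{j | A ⟨0, hp⟩ j < v} ≤
      #{x ∈ bottlenecks hp hq A | x < v} + 1 := by
  rw [← hS.card_filter_lt_firstCol, ← hS.card_filter_lt_firstRow,
    ← card_union_add_card_inter, ← filter_union, ← filter_inter_distrib,
    hA.firstCol_inter_firstRow, bottlenecks]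
  gcongr
  exact (card_filter_le _ _).trans_eq (card_singleton _)

lemma IsSorted.card_filter_lt_le_mul (hS : IsSorted A) (hp : 0 < p) (hq : 0 < q) (v : ℕ) :
    #{ij : Fin p × Fin q | A ij.1 ij.2 < v} ≤
      #{i | A i ⟨0, hq⟩ < v} * #{j | A ⟨0, hp⟩ j < v} := by
  rw [← card_product]
  refine card_le_card fun ij hij => ?_
  simp only [mem_filter, mem_univ, true_and, mem_product] at hij ⊢
  exact ⟨((hS.1 ij.1).monotone (Nat.zero_le ij.2.val)).trans_lt hij,
    ((hS.2 ij.2).monotone (Nat.zero_le ij.1.val)).trans_lt hij⟩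

end Layout

/-- For a sorted `p × q` layout, the bottleneck values (the entries of the
first row and the first column) are `p + q - 1` in number, and the `k`-th smallest of them
is at most `ω(k)` for every `k ∈ {1, …, p+q-1}`. -/
theorem bottleneck_bound (p q : ℕ) (hp : 0 < p) (hq : 0 < q)
    (A : Fin p → Fin q → ℕ) (hA : IsLayout p q A) (hS : IsSorted A) :
    let B := (Finset.univ.image fun i : Fin p => A i ⟨0, hq⟩) ∪
      (Finset.univ.image fun j : Fin q => A ⟨0, hp⟩ j)
    let L := B.sort (· ≤ ·)
    L.length = p + q - 1 ∧
      ∀ k, 1 ≤ k → k ≤ p + q - 1 → L.getD (k - 1) 0 ≤ omegaFn k := by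
  intro B L
  have hlen : L.length = p + q - 1 := (length_sort _).trans (card_bottlenecks hA hS hp hq)
  refine ⟨hlen, fun k hk1 hk2 => ?_⟩
  have hk : k - 1 < L.length := by omega
  rw [List.getD_eq_getElem _ _ hk, omegaFn_eq_sq_div_four]
  set v := L[k - 1]
  obtain ⟨i, j, hij⟩ : ∃ i j, A i j = v := by
    rcases mem_union.1 ((mem_sort _).1 (List.getElem_mem hk)) with h | h <;>
      obtain ⟨_, -, h⟩ := mem_image.1 h
    exacts [⟨_, _, h⟩, ⟨_, _, h⟩]
  have hrank : #{x ∈ bottlenecks hp hq A | x < v} = k - 1 := card_filter_lt_sort_getElem B hk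
  have hbelow := card_filter_lt_firstCol_add_firstRow_le hA hS hp hq v
  calc v = #{ij : Fin p × Fin q | A ij.1 ij.2 < v} + 1 := by
        rw [← hij, hA.card_filter_lt_apply_add_one]
    _ ≤ #{i | A i ⟨0, hq⟩ < v} * #{j | A ⟨0, hp⟩ j < v} + 1 := by
        gcongr; exact hS.card_filter_lt_le_mul hp hq v
    _ ≤ (#{i | A i ⟨0, hq⟩ < v} + #{j | A ⟨0, hp⟩ j < v}) ^ 2 / 4 + 1 := by
        gcongr; exact Nat.mul_le_sq_add_div_four _ _
    _ ≤ k ^ 2 / 4 + 1 := by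
        gcongr
        omega
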